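/- arXiv:0909.4828 — 5 statements merged into one kernel-verified Lean document; each statement's English description precedes it below -/
import Mathlib

section
/- Let X be a real-valued random variable with c.d.f. F_X and point masses P_X(x) = P(X = x), and let Θ ~ Uniform(0,1) be independent of X. Then the random variable F_X(X) − Θ·P_X(X) is uniformly distributed on [0,1]. In particular, if X has a continuous distribution (no atoms), then F_X(X) ~ Uniform(0,1). -/
/-!
Let `ν` be the law of `X` and `D x θ = F x - θ ν{x}`, so that the variable in question is
`D X Θ`, whose law is the image of `ν ⊗ Unif[0,1]` under `D`. For `t ∈ (0,1)` take the
`t`-quantile `q` of `ν`: `F x < t` for `x < q` and `t ≤ F q`. For `θ ∈ [0,1]`, `D x θ < t` holds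
for every `x < q`, never for `x > q` (there `D x θ ≥ ν(-∞, x) ≥ F q ≥ t`), and at `x = q` exactly
when `θ` exceeds `(F q - t) / ν{q}`. Hence `P(D < t) = ν(-∞, q) + (t - ν(-∞, q)) = t`, and the
strict sublevel sets `{D < t}`, `t ∈ (0,1)`, already determine a probability measure on `ℝ`.
-/

open MeasureTheory ProbabilityTheory Set Filter Topology

theorem StieltjesFunction.exists_forall_lt_lt_and_le (f : StieltjesFunction ℝ) {a b t : ℝ}
    (hbot : Tendsto f atBot (𝓝 a)) (htop : Tendsto f atTop (𝓝 b)) (hat : a < t) (htb : t < b) :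
    ∃ q, (∀ x < q, f x < t) ∧ t ≤ f q := by
  set S := {x | t ≤ f x}
  obtain ⟨y, hy⟩ := (htop.eventually_const_lt htb).exists
  obtain ⟨c, hc⟩ := eventually_atBot.1 (hbot.eventually_lt_const hat)
  have hS : S.Nonempty := ⟨y, hy.le⟩
  have hSc : c ∈ lowerBounds S := fun x hx => not_lt.1 fun hxc => (hc x hxc.le).not_ge hx
  refine ⟨sInf S, fun x hx => not_le.1 fun hxS => notMem_of_lt_csInf hx ⟨c, hSc⟩ hxS, ?_⟩
  refine ge_of_tendsto ((f.right_continuous _).mono Ioi_subset_Ici_self) ?_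
  filter_upwards [self_mem_nhdsWithin] with x hx
  obtain ⟨s, hsS, hsx⟩ := exists_lt_of_csInf_lt hS hx
  exact hsS.trans (f.mono hsx.le)

theorem Monotone.leftLim_le_of_forall_lt_le {f : ℝ → ℝ} (hf : Monotone f) {q t : ℝ}
    (h : ∀ x < q, f x ≤ t) : Function.leftLim f q ≤ t :=
  _root_.le_of_tendsto (hf.tendsto_leftLim q) (eventually_nhdsWithin_of_forall h)

theorem MeasureTheory.Measure.ext_of_Iio_of_isProbabilityMeasure {α : Type*}
    [TopologicalSpace α] {_ : MeasurableSpace α} [SecondCountableTopology α] [LinearOrder α]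
    [OrderTopology α] [BorelSpace α] (μ ν : Measure α) [IsProbabilityMeasure μ]
    [IsProbabilityMeasure ν] (h : ∀ a, μ (Iio a) = ν (Iio a)) : μ = ν :=
  Measure.ext_of_Ici μ ν fun a => by
    rw [← compl_Iio, prob_compl_eq_one_sub measurableSet_Iio,
      prob_compl_eq_one_sub measurableSet_Iio, h]

instance Real.isProbabilityMeasure_restrict_Icc_zero_one :
    IsProbabilityMeasure (volume.restrict (Icc (0 : ℝ) 1)) :=
  ⟨by simp⟩

lemma measure_Iio_eq_ofReal_min_of_forall_mem_Ioo (ρ : Measure ℝ) [IsProbabilityMeasure ρ]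
    (h : ∀ t ∈ Ioo (0 : ℝ) 1, ρ (Iio t) = ENNReal.ofReal t) (t : ℝ) :
    ρ (Iio t) = ENNReal.ofReal (min t 1) := by
  have hcont (s : ℝ) : Tendsto ENNReal.ofReal (𝓝 s) (𝓝 (ENNReal.ofReal s)) :=
    ENNReal.continuous_ofReal.tendsto s
  rcases le_or_gt t 0 with ht0 | ht0
  · rw [min_eq_left (by linarith), ENNReal.ofReal_of_nonpos ht0, ← nonpos_iff_eq_zero,
      ← ENNReal.ofReal_zero]
    refine ge_of_tendsto ((hcont 0).mono_left (nhdsWithin_le_nhds (s := Ioi 0))) ?_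
    filter_upwards [Ioo_mem_nhdsGT zero_lt_one] with s hs
    exact h s hs ▸ measure_mono (Iio_subset_Iio (ht0.trans hs.1.le))
  rcases lt_or_ge t 1 with ht1 | ht1
  · rw [min_eq_left ht1.le, h t ⟨ht0, ht1⟩]
  rw [min_eq_right ht1, ENNReal.ofReal_one]
  refine le_antisymm prob_le_one ?_
  rw [← ENNReal.ofReal_one]
  refine le_of_tendsto ((hcont 1).mono_left (nhdsWithin_le_nhds (s := Iio 1))) ?_
  filter_upwards [Ioo_mem_nhdsLT zero_lt_one] with s hs
  exact h s hs ▸ measure_mono (Iio_subset_Iio (hs.2.le.trans ht1))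

lemma eq_volume_restrict_Icc_of_forall_mem_Ioo (ρ : Measure ℝ) [IsProbabilityMeasure ρ]
    (h : ∀ t ∈ Ioo (0 : ℝ) 1, ρ (Iio t) = ENNReal.ofReal t) :
    ρ = volume.restrict (Icc 0 1) := by
  have hunif : ∀ t ∈ Ioo (0 : ℝ) 1, volume.restrict (Icc 0 1) (Iio t) = ENNReal.ofReal t := by
    intro t ht
    have hinter : Iio t ∩ Icc 0 1 = Ico 0 t := by
      ext x
      simp only [mem_Ioo] at ht
      simp only [mem_inter_iff, mem_Iio, mem_Icc, mem_Ico]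
      grind
    rw [Measure.restrict_apply measurableSet_Iio, hinter, Real.volume_Ico, sub_zero]
  refine Measure.ext_of_Iio_of_isProbabilityMeasure _ _ fun t => ?_
  rw [measure_Iio_eq_ofReal_min_of_forall_mem_Ioo ρ h,
    measure_Iio_eq_ofReal_min_of_forall_mem_Ioo _ hunif]

lemma ofReal_mul_volume_setOf_add_sub_mul_lt {g p t : ℝ} (hp : 0 ≤ p) (hgt : g ≤ t)
    (htp : t ≤ g + p) :
    ENNReal.ofReal p * volume {θ ∈ Icc (0 : ℝ) 1 | g + p - θ * p < t}
      = ENNReal.ofReal (t - g) := by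
  rcases hp.eq_or_lt with rfl | hp
  · simp [show t = g by linarith]
  set c := (g + p - t) / p
  have hset : {θ ∈ Icc (0 : ℝ) 1 | g + p - θ * p < t} = Ioc c 1 := by
    ext θ
    simp only [mem_ofPred_eq, mem_Icc, mem_Ioc, c, div_lt_iff₀ hp]
    constructor
    · rintro ⟨⟨-, hθ1⟩, hθ⟩
      exact ⟨by linarith, hθ1⟩
    · rintro ⟨hθ, hθ1⟩
      exact ⟨⟨by nlinarith, hθ1⟩, by linarith⟩
  rw [hset, Real.volume_Ioc, ← ENNReal.ofReal_mul hp.le]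
  congr 1
  rw [mul_sub, mul_one, mul_div_cancel₀ _ hp.ne']
  ring

namespace ProbabilityTheory

variable (ν : Measure ℝ)

/-- Rüschendorf's distributional transform `ν(-∞, x) + V ν{x}`, written with `V = 1 - θ`. -/
noncomputable def distributionalTransform (x θ : ℝ) : ℝ := cdf ν x - θ * ν.real {x}

lemma distributionalTransform_le_cdf {x θ : ℝ} (hθ : 0 ≤ θ) :
    distributionalTransform ν x θ ≤ cdf ν x :=
  sub_le_self _ (mul_nonneg hθ measureReal_nonneg)

variable [IsProbabilityMeasure ν]

lemma cdf_eq_measureReal_Iio_add (x : ℝ) : cdf ν x = ν.real (Iio x) + ν.real {x} := by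
  rw [cdf_eq_real, ← Iio_union_right, measureReal_union (by simp) (measurableSet_singleton x)]

lemma measure_Iio_eq_ofReal_leftLim_cdf (x : ℝ) :
    ν (Iio x) = ENNReal.ofReal (Function.leftLim (cdf ν) x) := by
  conv_lhs => rw [← measure_cdf ν]
  rw [(cdf ν).measure_Iio (tendsto_cdf_atBot ν), sub_zero]

lemma measurable_measureReal_singleton : Measurable fun x => ν.real {x} := by
  have hIio : Monotone fun x => ν.real (Iio x) :=
    fun x y hxy => measureReal_mono (Iio_subset_Iio hxy)
  have hdiff : (fun x => ν.real {x}) = fun x => cdf ν x - ν.real (Iio x) := by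
    ext x
    rw [cdf_eq_measureReal_Iio_add]
    ring
  rw [hdiff]
  exact (monotone_cdf ν).measurable.sub hIio.measurable

lemma measurable_distributionalTransform :
    Measurable (Function.uncurry (distributionalTransform ν)) :=
  ((monotone_cdf ν).measurable.comp measurable_fst).sub
    (measurable_snd.mul ((measurable_measureReal_singleton ν).comp measurable_fst))

lemma distributionalTransform_eq (x θ : ℝ) :
    distributionalTransform ν x θ = ν.real (Iio x) + ν.real {x} - θ * ν.real {x} := by
  rw [distributionalTransform, cdf_eq_measureReal_Iio_add]

lemma measureReal_Iio_le_distributionalTransform {x θ : ℝ} (hθ : θ ≤ 1) :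
    ν.real (Iio x) ≤ distributionalTransform ν x θ := by
  rw [distributionalTransform_eq]
  nlinarith [measureReal_nonneg (μ := ν) (s := {x})]

lemma setOf_distributionalTransform_lt_inter_eq {q t : ℝ} (hlt : ∀ x < q, cdf ν x < t)
    (hle : t ≤ cdf ν q) :
    {p : ℝ × ℝ | distributionalTransform ν p.1 p.2 < t} ∩ univ ×ˢ Icc 0 1
      = Iio q ×ˢ Icc 0 1 ∪ {q} ×ˢ {θ ∈ Icc 0 1 | distributionalTransform ν q θ < t} := by
  ext ⟨x, θ⟩
  simp only [mem_inter_iff, mem_ofPred_eq, mem_prod, mem_univ, true_and, mem_union,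
    mem_Iio, mem_singleton_iff]
  constructor
  · rintro ⟨hD, hθ⟩
    rcases lt_trichotomy x q with hxq | rfl | hqx
    · exact Or.inl ⟨hxq, hθ⟩
    · exact Or.inr ⟨rfl, hθ, hD⟩
    · refine absurd hD (not_lt.2 ?_)
      calc t ≤ cdf ν q := hle
        _ = ν.real (Iic q) := cdf_eq_real ν q
        _ ≤ ν.real (Iio x) := measureReal_mono (Iic_subset_Iio.2 hqx)
        _ ≤ distributionalTransform ν x θ := measureReal_Iio_le_distributionalTransform ν hθ.2
  · rintro (⟨hxq, hθ⟩ | ⟨rfl, hθ, hD⟩)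
    · exact ⟨(distributionalTransform_le_cdf ν hθ.1).trans_lt (hlt x hxq), hθ⟩
    · exact ⟨hD, hθ⟩

lemma prod_measure_setOf_distributionalTransform_lt {t : ℝ} (ht : t ∈ Ioo 0 1) :
    ν.prod (volume.restrict (Icc 0 1)) {p | distributionalTransform ν p.1 p.2 < t}
      = ENNReal.ofReal t := by
  obtain ⟨q, hlt, hle⟩ := (cdf ν).exists_forall_lt_lt_and_le (tendsto_cdf_atBot ν)
    (tendsto_cdf_atTop ν) ht.1 ht.2
  have hIio : ν.real (Iio q) ≤ t := by
    refine ENNReal.toReal_le_of_le_ofReal ht.1.le ?_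
    rw [measure_Iio_eq_ofReal_leftLim_cdf]
    exact ENNReal.ofReal_le_ofReal
      ((monotone_cdf ν).leftLim_le_of_forall_lt_le fun x hx => (hlt x hx).le)
  have hfibre : MeasurableSet {θ ∈ Icc (0 : ℝ) 1 | distributionalTransform ν q θ < t} :=
    measurableSet_Icc.inter (measurableSet_lt
      ((measurable_distributionalTransform ν).comp measurable_prodMk_left) measurable_const)
  have hprod : ν.prod (volume.restrict (Icc (0 : ℝ) 1))
      = (ν.prod volume).restrict (univ ×ˢ Icc 0 1) := by
    rw [← Measure.prod_restrict, Measure.restrict_univ]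
  rw [hprod, Measure.restrict_apply' (MeasurableSet.univ.prod measurableSet_Icc),
    setOf_distributionalTransform_lt_inter_eq ν hlt hle,
    measure_union (disjoint_prod.2 (Or.inl (by simp))) ((measurableSet_singleton q).prod hfibre),
    Measure.prod_prod, Measure.prod_prod, Real.volume_Icc, sub_zero, ENNReal.ofReal_one, mul_one]
  simp only [distributionalTransform_eq]
  rw [← ofReal_measureReal, ← ofReal_measureReal, ofReal_mul_volume_setOf_add_sub_mul_lt
    measureReal_nonneg hIio (by rwa [← cdf_eq_measureReal_Iio_add]),
    ← ENNReal.ofReal_add measureReal_nonneg (by linarith), add_sub_cancel]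

theorem map_distributionalTransform_prod :
    (ν.prod (volume.restrict (Icc 0 1))).map (Function.uncurry (distributionalTransform ν))
      = volume.restrict (Icc 0 1) := by
  have := Measure.isProbabilityMeasure_map (μ := ν.prod (volume.restrict (Icc (0 : ℝ) 1)))
    (measurable_distributionalTransform ν).aemeasurable
  refine eq_volume_restrict_Icc_of_forall_mem_Ioo _ fun t ht => ?_
  rw [Measure.map_apply (measurable_distributionalTransform ν) measurableSet_Iio]
  exact prod_measure_setOf_distributionalTransform_lt ν ht

end ProbabilityTheory

/-- `F_X(X) − Θ·P_X(X)` is uniform on `[0,1]`; in particular if `X`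
has no atoms then `F_X(X)` is uniform on `[0,1]`. -/
theorem cdf_randomized_is_uniform
    {Ω : Type*} [MeasurableSpace Ω] (μ : Measure Ω) [IsProbabilityMeasure μ]
    (X Θ : Ω → ℝ) (hX : Measurable X) (hΘ : Measurable Θ)
    (hunif : Measure.map Θ μ = volume.restrict (Set.Icc (0:ℝ) 1))
    (hindep : IndepFun X Θ μ)
    (F : ℝ → ℝ) (hF : ∀ x, F x = (μ {ω | X ω ≤ x}).toReal)
    (P : ℝ → ℝ) (hP : ∀ x, P x = (μ {ω | X ω = x}).toReal) :
    Measure.map (fun ω => F (X ω) - Θ ω * P (X ω)) μ = volume.restrict (Set.Icc (0:ℝ) 1)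
    ∧ ((∀ x : ℝ, μ {ω | X ω = x} = 0) →
        Measure.map (fun ω => F (X ω)) μ = volume.restrict (Set.Icc (0:ℝ) 1)) := by
  set ν := μ.map X
  have := Measure.isProbabilityMeasure_map (μ := μ) hX.aemeasurable
  have hFν : F = cdf ν := funext fun x => by
    rw [hF, cdf_eq_real, map_measureReal_apply hX measurableSet_Iic]; rfl
  have hPν : P = fun x => ν.real {x} := funext fun x => by
    rw [hP, map_measureReal_apply hX (measurableSet_singleton x)]; rfl
  have hlaw : μ.map (fun ω => (X ω, Θ ω)) = ν.prod (volume.restrict (Icc 0 1)) := by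
    rw [(indepFun_iff_map_prod_eq_prod_map_map hX.aemeasurable hΘ.aemeasurable).1 hindep, hunif]
  have hU : μ.map (fun ω => F (X ω) - Θ ω * P (X ω)) = volume.restrict (Icc 0 1) := by
    rw [← map_distributionalTransform_prod ν, ← hlaw,
      Measure.map_map (measurable_distributionalTransform ν) (hX.prodMk hΘ), hFν, hPν]
    rfl
  refine ⟨hU, fun hatom => ?_⟩
  have hP0 : ∀ x, P x = 0 := by simp [hP, hatom]
  simpa [hP0] using hU
end

section
/- The function ξ(x) = x − α x^β on [0,1], with β > 1 and 0 < α < 1/β, is a contraction (nonnegative, concave, ξ(x) < x on (0,1]), and its decay profile satisfies r(n) = sup_x ξ^{(n)}(x) = O(n^{1/(1−β)}). -/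
/-!
Writing `ξ(y) = y (1 - α y^{β-1})` and applying Bernoulli's inequality to `(1 - α y^{β-1})^{1-β}`
shows that `y ↦ y^{1-β}` grows by at least `α (β - 1)` at each step of the orbit of any
`x ∈ (0, 1]`. After `n` steps `(ξ^[n] x)^{1-β} ≥ n α (β - 1)`, that is
`ξ^[n] x ≤ (α (β - 1))^{1/(1-β)} n^{1/(1-β)}`.
-/

open Set Real

theorem one_add_mul_self_le_rpow_one_add_of_nonpos {s p : ℝ} (hs : -1 < s) (hp : p ≤ 0) :
    1 + p * s ≤ (1 + s) ^ p := by
  have hlog : log (1 + s) ≤ s := by linarith [log_le_sub_one_of_pos (by linarith : 0 < 1 + s)]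
  rw [rpow_def_of_pos (by linarith)]
  nlinarith [add_one_le_exp (log (1 + s) * p)]

theorem Set.MapsTo.add_mul_le_iterate {X : Type*} {f : X → X} {s : Set X} {φ : X → ℝ} {c : ℝ}
    (hf : MapsTo f s s) (hφ : ∀ y ∈ s, φ y + c ≤ φ (f y)) (n : ℕ) {x : X} (hx : x ∈ s) :
    φ x + n * c ≤ φ (f^[n] x) := by
  induction n with
  | zero => simp
  | succ n ih =>
    rw [Function.iterate_succ_apply']
    push_cast
    linarith [hφ _ (hf.iterate n hx)]

section PolynomialContraction

variable {α β : ℝ}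

theorem concaveOn_sub_mul_rpow (hα : 0 ≤ α) (hβ : 1 ≤ β) :
    ConcaveOn ℝ (Ici 0) fun x : ℝ => x - α * x ^ β :=
  (concaveOn_id (convex_Ici 0)).sub ((convexOn_rpow hβ).smul hα)

theorem mapsTo_sub_mul_rpow_Icc (hα0 : 0 ≤ α) (hα1 : α ≤ 1) (hβ : 1 ≤ β) :
    MapsTo (fun x : ℝ => x - α * x ^ β) (Icc 0 1) (Icc 0 1) := by
  intro x ⟨hx0, hx1⟩
  have hpow : x ^ β ≤ x := rpow_le_self_of_le_one hx0 hx1 hβ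
  have : 0 ≤ α * x ^ β := by positivity
  constructor <;> nlinarith

theorem sub_mul_rpow_eq_mul_one_sub {x : ℝ} (hx : 0 < x) :
    x - α * x ^ β = x * (1 - α * x ^ (β - 1)) := by
  rw [rpow_sub_one hx.ne']
  field_simp

theorem mul_rpow_sub_one_lt_one (hα : α < 1) (hβ : 1 ≤ β) {x : ℝ} (hx : x ∈ Icc (0 : ℝ) 1) :
    α * x ^ (β - 1) < 1 := by
  have h0 : 0 ≤ x ^ (β - 1) := rpow_nonneg hx.1 _
  have h1 : x ^ (β - 1) ≤ 1 := rpow_le_one hx.1 hx.2 (by linarith)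
  nlinarith [mul_nonneg (sub_nonneg.mpr hα.le) h0]

theorem mapsTo_sub_mul_rpow_Ioc (hα0 : 0 ≤ α) (hα1 : α < 1) (hβ : 1 ≤ β) :
    MapsTo (fun x : ℝ => x - α * x ^ β) (Ioc 0 1) (Ioc 0 1) := by
  intro x hx
  have hlt := mul_rpow_sub_one_lt_one hα1 hβ (Ioc_subset_Icc_self hx)
  have hpos : 0 < x - α * x ^ β := by
    rw [sub_mul_rpow_eq_mul_one_sub hx.1]
    exact mul_pos hx.1 (by linarith)
  have : 0 ≤ α * x ^ β := by have := hx.1; positivity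
  exact ⟨hpos, by linarith [hx.2]⟩

theorem rpow_one_sub_add_le_sub_mul_rpow (hα : α < 1) (hβ : 1 ≤ β) {y : ℝ}
    (hy : y ∈ Ioc (0 : ℝ) 1) :
    y ^ (1 - β) + α * (β - 1) ≤ (y - α * y ^ β) ^ (1 - β) := by
  have hy0 := hy.1
  set t := α * y ^ (β - 1) with ht
  have ht1 : t < 1 := mul_rpow_sub_one_lt_one hα hβ (Ioc_subset_Icc_self hy)
  have hbern : 1 + (1 - β) * -t ≤ (1 - t) ^ (1 - β) := by
    simpa [sub_eq_add_neg] using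
      one_add_mul_self_le_rpow_one_add_of_nonpos (by linarith : -1 < -t) (by linarith : 1 - β ≤ 0)
  have hcancel : y ^ (1 - β) * t = α := by
    rw [ht, mul_left_comm, ← rpow_add hy0]
    norm_num
  calc y ^ (1 - β) + α * (β - 1) = y ^ (1 - β) * (1 + (1 - β) * -t) := by
        rw [← hcancel]; ring
    _ ≤ y ^ (1 - β) * (1 - t) ^ (1 - β) := by gcongr
    _ = (y - α * y ^ β) ^ (1 - β) := by
        rw [sub_mul_rpow_eq_mul_one_sub hy0, mul_rpow hy0.le (by linarith)]

theorem iterate_sub_mul_rpow_le (hα0 : 0 < α) (hα1 : α < 1) (hβ : 1 < β) {n : ℕ} (hn : 0 < n)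
    {x : ℝ} (hx : x ∈ Icc (0 : ℝ) 1) :
    (fun x : ℝ => x - α * x ^ β)^[n] x ≤
      (α * (β - 1)) ^ (1 / (1 - β)) * (n : ℝ) ^ (1 / (1 - β)) := by
  have hc : 0 < α * (β - 1) := mul_pos hα0 (by linarith)
  have hexp : 1 / (1 - β) ≤ 0 := div_nonpos_of_nonneg_of_nonpos zero_le_one (by linarith)
  rcases hx.1.eq_or_lt with rfl | hx0
  · rw [Function.iterate_fixed (by simp [zero_rpow (by linarith : β ≠ 0)])]
    positivity
  have hmaps := mapsTo_sub_mul_rpow_Ioc hα0.le hα1 hβ.le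
  set y := (fun x : ℝ => x - α * x ^ β)^[n] x
  have hy : y ∈ Ioc (0 : ℝ) 1 := hmaps.iterate n ⟨hx0, hx.2⟩
  have hgrowth : x ^ (1 - β) + n * (α * (β - 1)) ≤ y ^ (1 - β) :=
    hmaps.add_mul_le_iterate (fun z hz => rpow_one_sub_add_le_sub_mul_rpow hα1 hβ.le hz) n
      ⟨hx0, hx.2⟩
  have hx1 : 1 ≤ x ^ (1 - β) := one_le_rpow_of_pos_of_le_one_of_nonpos hx0 hx.2 (by linarith)
  calc y = (y ^ (1 - β)) ^ (1 / (1 - β)) := by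
        rw [one_div, rpow_rpow_inv hy.1.le (by linarith)]
    _ ≤ (n * (α * (β - 1))) ^ (1 / (1 - β)) :=
        rpow_le_rpow_of_nonpos (by positivity) (by linarith) hexp
    _ = (α * (β - 1)) ^ (1 / (1 - β)) * (n : ℝ) ^ (1 / (1 - β)) := by
        rw [mul_rpow (by positivity) hc.le, mul_comm]

end PolynomialContraction

/-- `ξ(x) = x − α x^β` with `β > 1`, `0 < α < 1/β` is a contraction
on `[0,1]` with polynomial decay profile `r(n) = O(n^{1/(1−β)})`. -/
theorem polynomial_contraction_decay
    (α β : ℝ) (hβ : 1 < β) (hα0 : 0 < α) (hα : α < 1 / β)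
    (ξ : ℝ → ℝ) (hξ : ∀ x : ℝ, ξ x = x - α * x ^ β) :
    (∀ x ∈ Set.Icc (0:ℝ) 1, 0 ≤ ξ x) ∧
    Set.MapsTo ξ (Set.Icc 0 1) (Set.Icc 0 1) ∧
    ConcaveOn ℝ (Set.Icc 0 1) ξ ∧
    (∀ x ∈ Set.Ioc (0:ℝ) 1, ξ x < x) ∧
    (∃ C : ℝ, 0 < C ∧ ∀ n : ℕ, 1 ≤ n →
      (⨆ x : Set.Icc (0:ℝ) 1, ξ^[n] x) ≤ C * (n : ℝ) ^ (1 / (1 - β))) := by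
  obtain rfl : ξ = fun x => x - α * x ^ β := funext hξ
  have hα1 : α < 1 := hα.trans ((div_lt_one (by linarith)).mpr hβ)
  have hmaps := mapsTo_sub_mul_rpow_Icc hα0.le hα1.le hβ.le
  refine ⟨fun x hx => (hmaps hx).1, hmaps,
    (concaveOn_sub_mul_rpow hα0.le hβ.le).subset Icc_subset_Ici_self (convex_Icc 0 1),
    fun x hx => sub_lt_self x (by have := hx.1; positivity),
    (α * (β - 1)) ^ (1 / (1 - β)), rpow_pos_of_pos (mul_pos hα0 (by linarith)) _,
    fun n hn => ciSup_le fun x => iterate_sub_mul_rpow_le hα0 hα1 hβ hn x.2⟩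
end

section
/- Let X be a continuous real-valued random variable with support ℝ, bounded unimodal density f_X satisfying, for some constants m_0, m_1 > 0, b ≥ a > 1, x_0 > 1: m_0|x|^{-b} ≤ f_X(x) ≤ m_1|x|^{-a} for all |x| > x_0. Then X has a regular tail: there exist γ ∈ (0, 1/2] and positive constants c_0, c_1, α_0, α_1 such that c_0 f_X(x)^{α_0} ≤ min(F_X(x), 1 − F_X(x)) ≤ c_1 f_X(x)^{α_1} for all x with min(F_X(x), 1 − F_X(x)) ≤ γ. -/
/-!
Beyond `|x₀|` the density is squeezed between `m₀ t^(-b)` and `m₁ t^(-a)`, so each tail of `F`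
at `±y` lies between constant multiples of `y^(1-b)` and `y^(1-a)`. Inverting the same pointwise
bounds at `t = y` turns these powers of `y` into powers of `f(±y)`. As `F` is strictly increasing,
a small enough `γ` confines `x` to the region `|x| ≥ R` where all this applies.
-/

open MeasureTheory Set

theorem integral_Ioi_rpow_neg {p x : ℝ} (hp : 1 < p) (hx : 0 < x) :
    ∫ t in Ioi x, t ^ (-p) = x ^ (1 - p) / (p - 1) := by
  rw [integral_Ioi_rpow_of_lt (by linarith) hx, neg_add_eq_sub, ← neg_sub p 1, div_neg, neg_div,
    neg_neg]

theorem setIntegral_Ioi_le_of_le_mul_rpow_neg {g : ℝ → ℝ} {c p x : ℝ} (hp : 1 < p) (hx : 0 < x)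
    (hg : IntegrableOn g (Ioi x)) (h : ∀ t ∈ Ioi x, g t ≤ c * t ^ (-p)) :
    ∫ t in Ioi x, g t ≤ c * (x ^ (1 - p) / (p - 1)) := by
  rw [← integral_Ioi_rpow_neg hp hx, ← integral_const_mul]
  exact setIntegral_mono_on hg
    ((integrableOn_Ioi_rpow_of_lt (by linarith) hx).const_mul c) measurableSet_Ioi h

theorem le_setIntegral_Ioi_of_mul_rpow_neg_le {g : ℝ → ℝ} {c p x : ℝ} (hp : 1 < p) (hx : 0 < x)
    (hg : IntegrableOn g (Ioi x)) (h : ∀ t ∈ Ioi x, c * t ^ (-p) ≤ g t) :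
    c * (x ^ (1 - p) / (p - 1)) ≤ ∫ t in Ioi x, g t := by
  rw [← integral_Ioi_rpow_neg hp hx, ← integral_const_mul]
  exact setIntegral_mono_on
    ((integrableOn_Ioi_rpow_of_lt (by linarith) hx).const_mul c) hg measurableSet_Ioi h

theorem rpow_neg_rpow_div {y : ℝ} (hy : 0 < y) (a s : ℝ) (ha : a ≠ 0) :
    (y ^ (-a)) ^ (s / a) = y ^ (-s) := by
  rw [← Real.rpow_mul hy.le]
  congr 1
  field_simp

theorem div_rpow_le_rpow_neg_of_le_mul_rpow_neg {v c y a s : ℝ} (hv : 0 ≤ v) (hc : 0 < c)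
    (hy : 0 < y) (ha : 0 < a) (hs : 0 ≤ s) (h : v ≤ c * y ^ (-a)) :
    (v / c) ^ (s / a) ≤ y ^ (-s) := by
  rw [← rpow_neg_rpow_div hy a s ha.ne']
  exact Real.rpow_le_rpow (div_nonneg hv hc.le) ((div_le_iff₀' hc).2 h) (div_nonneg hs ha.le)

theorem rpow_neg_le_div_rpow_of_mul_rpow_neg_le {v c y b s : ℝ} (hc : 0 < c)
    (hy : 0 < y) (hb : 0 < b) (hs : 0 ≤ s) (h : c * y ^ (-b) ≤ v) :
    y ^ (-s) ≤ (v / c) ^ (s / b) := by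
  rw [← rpow_neg_rpow_div hy b s hb.ne']
  exact Real.rpow_le_rpow (by positivity) ((le_div_iff₀' hc).2 h) (div_nonneg hs hb.le)

theorem tail_integral_bounds_of_rpow_bounds {g : ℝ → ℝ} {m₀ m₁ a b y : ℝ} (hm₀ : 0 < m₀)
    (hm₁ : 0 < m₁) (ha : 1 < a) (hab : a ≤ b) (hy : 0 < y) (hg : IntegrableOn g (Ioi y))
    (hbounds : ∀ t, y ≤ t → m₀ * t ^ (-b) ≤ g t ∧ g t ≤ m₁ * t ^ (-a)) :
    m₀ / (b - 1) / m₁ ^ ((b - 1) / a) * g y ^ ((b - 1) / a) ≤ ∫ t in Ioi y, g t ∧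
      ∫ t in Ioi y, g t ≤ m₁ / (a - 1) / m₀ ^ ((a - 1) / b) * g y ^ ((a - 1) / b) := by
  have hb : 1 < b := ha.trans_le hab
  obtain ⟨hgy_lower, hgy_upper⟩ := hbounds y le_rfl
  have hgy : 0 ≤ g y := le_trans (by positivity) hgy_lower
  constructor
  · calc m₀ / (b - 1) / m₁ ^ ((b - 1) / a) * g y ^ ((b - 1) / a)
        = m₀ * ((g y / m₁) ^ ((b - 1) / a) / (b - 1)) := by
          rw [Real.div_rpow hgy hm₁.le]; ring
      _ ≤ m₀ * (y ^ (1 - b) / (b - 1)) := by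
          gcongr
          rw [← neg_sub b 1]
          exact div_rpow_le_rpow_neg_of_le_mul_rpow_neg hgy hm₁ hy (by linarith) (by linarith)
            hgy_upper
      _ ≤ ∫ t in Ioi y, g t :=
          le_setIntegral_Ioi_of_mul_rpow_neg_le hb hy hg fun t ht => (hbounds t ht.le).1
  · calc ∫ t in Ioi y, g t ≤ m₁ * (y ^ (1 - a) / (a - 1)) :=
          setIntegral_Ioi_le_of_le_mul_rpow_neg ha hy hg fun t ht => (hbounds t ht.le).2
      _ ≤ m₁ * ((g y / m₀) ^ ((a - 1) / b) / (a - 1)) := by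
          gcongr
          rw [← neg_sub a 1]
          exact rpow_neg_le_div_rpow_of_mul_rpow_neg_le hm₀ hy (by linarith) (by linarith)
            hgy_lower
      _ = m₁ / (a - 1) / m₀ ^ ((a - 1) / b) * g y ^ ((a - 1) / b) := by
          rw [Real.div_rpow hgy hm₀.le]; ring

theorem setIntegral_pos_of_forall_pos {α : Type*} [MeasurableSpace α] {μ : Measure α}
    {f : α → ℝ} {s : Set α} (hf : ∀ x, 0 < f x) (hint : IntegrableOn f s μ) (hs : μ s ≠ 0) :
    0 < ∫ x in s, f x ∂μ := by
  rw [setIntegral_pos_iff_support_of_nonneg_ae (ae_of_all _ fun x => (hf x).le) hint,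
    Function.support_eq_univ fun x => (hf x).ne', univ_inter]
  exact pos_iff_ne_zero.2 hs

theorem strictMono_integral_Iic {f : ℝ → ℝ} (hf : ∀ x, 0 < f x) (hint : Integrable f) :
    StrictMono fun x => ∫ t in Iic x, f t := by
  intro x y hxy
  dsimp only
  rw [← sub_pos, intervalIntegral.integral_Iic_sub_Iic hint.integrableOn hint.integrableOn,
    intervalIntegral.integral_of_le hxy.le]
  exact setIntegral_pos_of_forall_pos hf hint.integrableOn (by simp [hxy])

theorem one_sub_integral_Iic {f : ℝ → ℝ} (hint : Integrable f) (hf : ∫ t, f t = 1) (x : ℝ) :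
    1 - ∫ t in Iic x, f t = ∫ t in Ioi x, f t := by
  rw [← hf, ← intervalIntegral.integral_Iic_add_Ioi hint.integrableOn hint.integrableOn]
  ring

theorem exists_min_le_tail_bounds_of_strictMono {F L U : ℝ → ℝ} {l r : ℝ} (hF : StrictMono F)
    (hl : 0 < F l) (hr : 0 < 1 - F r) (hleft : ∀ x ≤ l, L x ≤ F x ∧ F x ≤ U x)
    (hright : ∀ x, r ≤ x → L x ≤ 1 - F x ∧ 1 - F x ≤ U x) :
    ∃ γ ∈ Ioc (0 : ℝ) (1 / 2), ∀ x, min (F x) (1 - F x) ≤ γ →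
      L x ≤ min (F x) (1 - F x) ∧ min (F x) (1 - F x) ≤ U x := by
  set γ := min (min (F l) (1 - F r)) (1 / 2)
  have hγ_left : γ ≤ F l := (min_le_left _ _).trans (min_le_left _ _)
  have hγ_right : γ ≤ 1 - F r := (min_le_left _ _).trans (min_le_right _ _)
  refine ⟨γ, ⟨by positivity, min_le_right _ _⟩, fun x hx => ?_⟩
  rcases min_choice (F x) (1 - F x) with h | h <;> rw [h] at hx ⊢
  · exact hleft x (hF.le_iff_le.1 (hx.trans hγ_left))
  · exact hright x (hF.le_iff_le.1 (by linarith))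

theorem rpow_bounds_of_abs_rpow_bounds {f : ℝ → ℝ} {m₀ m₁ a b x₀ t : ℝ}
    (htail : ∀ x : ℝ, x₀ < |x| → m₀ * |x| ^ (-b) ≤ f x ∧ f x ≤ m₁ * |x| ^ (-a))
    (ht₀ : 0 ≤ t) (hx₀t : x₀ < t) :
    (m₀ * t ^ (-b) ≤ f t ∧ f t ≤ m₁ * t ^ (-a)) ∧
      (m₀ * t ^ (-b) ≤ f (-t) ∧ f (-t) ≤ m₁ * t ^ (-a)) := by
  have habs : |t| = t := abs_of_nonneg ht₀
  have hright := htail t (habs.symm ▸ hx₀t)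
  have hleft := htail (-t) (by rwa [abs_neg, habs])
  rw [habs] at hright
  rw [abs_neg, habs] at hleft
  exact ⟨hright, hleft⟩

theorem regular_tail_of_polynomial_tail_general
    (f : ℝ → ℝ) (hfpos : ∀ x, 0 < f x)
    (hfint : (∫ x, f x) = 1)
    (F : ℝ → ℝ) (hF : ∀ x, F x = ∫ y in Set.Iic x, f y)
    (m₀ m₁ a b x₀ : ℝ) (hm₀ : 0 < m₀) (hm₁ : 0 < m₁)
    (ha : 1 < a) (hab : a ≤ b)
    (htail : ∀ x : ℝ, x₀ < |x| → m₀ * |x| ^ (-b) ≤ f x ∧ f x ≤ m₁ * |x| ^ (-a)) :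
    ∃ γ ∈ Set.Ioc (0:ℝ) (1/2), ∃ c₀ c₁ α₀ α₁ : ℝ,
      0 < c₀ ∧ 0 < c₁ ∧ 0 < α₀ ∧ 0 < α₁ ∧
      ∀ x : ℝ, min (F x) (1 - F x) ≤ γ →
        c₀ * f x ^ α₀ ≤ min (F x) (1 - F x) ∧
        min (F x) (1 - F x) ≤ c₁ * f x ^ α₁ := by
  have hb : 1 < b := ha.trans_le hab
  have hint : Integrable f := .of_integral_ne_zero (by rw [hfint]; exact one_ne_zero)
  have hFtail (x : ℝ) : 1 - F x = ∫ y in Ioi x, f y := hF x ▸ one_sub_integral_Iic hint hfint x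
  obtain ⟨R, hR_pos, hx₀R⟩ : ∃ R, 0 < R ∧ x₀ < R :=
    ⟨|x₀| + 1, by positivity, by linarith [le_abs_self x₀]⟩
  have hbounds (t : ℝ) (ht : R ≤ t) :=
    rpow_bounds_of_abs_rpow_bounds htail (by linarith) (by linarith)
  set c₀ := m₀ / (b - 1) / m₁ ^ ((b - 1) / a)
  set c₁ := m₁ / (a - 1) / m₀ ^ ((a - 1) / b)
  have hleft (x : ℝ) (hx : x ≤ -R) :
      c₀ * f x ^ ((b - 1) / a) ≤ F x ∧ F x ≤ c₁ * f x ^ ((a - 1) / b) := by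
    have h := tail_integral_bounds_of_rpow_bounds (g := fun t => f (-t)) (y := -x) hm₀ hm₁ ha hab
      (by linarith) hint.comp_neg.integrableOn fun t ht => (hbounds t (by linarith)).2
    rwa [integral_comp_neg_Ioi, neg_neg, ← hF] at h
  have hright (x : ℝ) (hx : R ≤ x) :
      c₀ * f x ^ ((b - 1) / a) ≤ 1 - F x ∧ 1 - F x ≤ c₁ * f x ^ ((a - 1) / b) := by
    have h := tail_integral_bounds_of_rpow_bounds (y := x) hm₀ hm₁ ha hab (by linarith)
      hint.integrableOn fun t ht => (hbounds t (by linarith)).1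
    rwa [← hFtail] at h
  obtain ⟨γ, hγ, hγ_bounds⟩ := exists_min_le_tail_bounds_of_strictMono
    (by simpa only [← funext hF] using strictMono_integral_Iic hfpos hint)
    ((hF _).symm ▸ setIntegral_pos_of_forall_pos hfpos hint.integrableOn (by simp))
    ((hFtail _).symm ▸ setIntegral_pos_of_forall_pos hfpos hint.integrableOn (by simp))
    hleft hright
  exact ⟨γ, hγ, c₀, c₁, _, _, div_pos (div_pos hm₀ (by linarith)) (by positivity),
    div_pos (div_pos hm₁ (by linarith)) (by positivity),
    div_pos (by linarith) (by linarith), div_pos (by linarith) (by linarith), hγ_bounds⟩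

/-- a bounded unimodal density with full support and polynomial
tail bounds `m₀|x|^{-b} ≤ f(x) ≤ m₁|x|^{-a}` (`b ≥ a > 1`) has a regular tail. -/
theorem regular_tail_of_polynomial_tail
    (f : ℝ → ℝ) (hfpos : ∀ x, 0 < f x)
    (hfint : (∫ x, f x) = 1)
    (hbdd : ∃ M : ℝ, ∀ x, f x ≤ M)
    (m : ℝ) (hmono : MonotoneOn f (Set.Iic m)) (hanti : AntitoneOn f (Set.Ici m))
    (F : ℝ → ℝ) (hF : ∀ x, F x = ∫ y in Set.Iic x, f y)
    (m₀ m₁ a b x₀ : ℝ) (hm₀ : 0 < m₀) (hm₁ : 0 < m₁)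
    (ha : 1 < a) (hab : a ≤ b) (hx₀ : 1 < x₀)
    (htail : ∀ x : ℝ, x₀ < |x| → m₀ * |x| ^ (-b) ≤ f x ∧ f x ≤ m₁ * |x| ^ (-a)) :
    ∃ γ ∈ Set.Ioc (0:ℝ) (1/2), ∃ c₀ c₁ α₀ α₁ : ℝ,
      0 < c₀ ∧ 0 < c₁ ∧ 0 < α₀ ∧ 0 < α₁ ∧
      ∀ x : ℝ, min (F x) (1 - F x) ≤ γ →
        c₀ * f x ^ α₀ ≤ min (F x) (1 - F x) ∧
        min (F x) (1 - F x) ≤ c₁ * f x ^ α₁ :=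
  regular_tail_of_polynomial_tail_general f hfpos hfint F hF m₀ m₁ a b x₀ hm₀ hm₁ ha hab htail
end

section
/- Let X be a continuous real-valued random variable with support ℝ, bounded unimodal density f_X satisfying, for some 0 < m_0 < m_1, a ≥ 1, b > 0, x_0 > 1: m_0 e^{-b|x|^a} ≤ f_X(x) ≤ m_1 e^{-b|x|^a} for all |x| > x_0. Then X has a regular tail, i.e., there exist γ ∈ (0,1/2] and positive constants c_0, c_1, α_0, α_1 with c_0 f_X(x)^{α_0} ≤ min(F_X(x), 1 − F_X(x)) ≤ c_1 f_X(x)^{α_1} whenever min(F_X(x), 1 − F_X(x)) ≤ γ. -/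
/-!
On `[x, ∞)` with `x ≥ 1` we have `b t^a ≥ b x^(a-1) t`, so the tail integral `∫_x^∞ f` is at most
`(m₁/b) e^{-b x^a} ≤ (m₁/(b m₀)) f(x)`. It is at least `∫_x^{x+1} f ≥ m₀ e^{-b (x+1)^a}`, and
`(x+1)^a ≤ 2^a x^a` turns this into `(m₀/m₁^{2^a}) f(x)^{2^a}`. The left tail is the right tail of
`t ↦ f(-t)`. On `[-x₁, x₁]` the monotone `F` keeps `min(F, 1 - F)` above
`p = min(F(-x₁), 1 - F(x₁)) > 0`, so `γ = p/2` excludes it; on the tails the other term of the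
minimum is at least `γ` while `f ≤ m₁`, which costs only a smaller constant.
-/

open MeasureTheory Set Real

section TailIntegral

variable {f : ℝ → ℝ} {m₀ m₁ a b x : ℝ}

lemma rpow_sub_one_mul_le_rpow {t : ℝ} (ha : 1 ≤ a) (hx : 0 < x) (hxt : x ≤ t) :
    x ^ (a - 1) * t ≤ t ^ a := by
  have ht : 0 < t := hx.trans_le hxt
  calc x ^ (a - 1) * t ≤ t ^ (a - 1) * t := by gcongr
    _ = t ^ a := by rw [← rpow_add_one ht.ne', sub_add_cancel]

lemma setIntegral_Ioi_le_of_le_exp_neg_rpow (hf : IntegrableOn f (Ioi x)) (hm₁ : 0 ≤ m₁)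
    (ha : 1 ≤ a) (hb : 0 < b) (hx : 1 ≤ x) (hle : ∀ t > x, f t ≤ m₁ * exp (-b * t ^ a)) :
    ∫ t in Ioi x, f t ≤ m₁ / b * exp (-b * x ^ a) := by
  set k := b * x ^ (a - 1)
  have hbk : b ≤ k := le_mul_of_one_le_right hb.le (one_le_rpow hx (by linarith))
  have hkx : k * x = b * x ^ a := by
    rw [mul_assoc, ← rpow_add_one (by linarith), sub_add_cancel]
  have hexp : ∀ t ∈ Ioi x, f t ≤ m₁ * exp (-k * t) := fun t ht ↦ (hle t ht).trans <| by
    have := mul_le_mul_of_nonneg_left (rpow_sub_one_mul_le_rpow ha (by linarith) (le_of_lt ht))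
      hb.le
    exact mul_le_mul_of_nonneg_left (exp_le_exp.2 (by linarith)) hm₁
  calc ∫ t in Ioi x, f t ≤ ∫ t in Ioi x, m₁ * exp (-k * t) :=
        setIntegral_mono_on hf ((integrableOn_exp_mul_Ioi (by linarith) x).const_mul m₁)
          measurableSet_Ioi hexp
    _ = m₁ * (exp (-(b * x ^ a)) / k) := by
        rw [integral_const_mul, integral_exp_mul_Ioi (by linarith), neg_mul, hkx, neg_div_neg_eq]
    _ ≤ m₁ * (exp (-(b * x ^ a)) / b) := by gcongr
    _ = m₁ / b * exp (-b * x ^ a) := by rw [neg_mul, mul_div_assoc', div_mul_eq_mul_div]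

lemma exp_neg_rpow_add_one_le_setIntegral_Ioi (hf : IntegrableOn f (Ioi x)) (hm₀ : 0 ≤ m₀)
    (ha : 0 ≤ a) (hb : 0 ≤ b) (hx : 0 ≤ x) (hge : ∀ t > x, m₀ * exp (-b * t ^ a) ≤ f t) :
    m₀ * exp (-b * (x + 1) ^ a) ≤ ∫ t in Ioi x, f t := by
  have hIoc : m₀ * exp (-b * (x + 1) ^ a) ≤ ∫ t in Ioc x (x + 1), f t := by
    have hconst : ∀ t ∈ Ioc x (x + 1), m₀ * exp (-b * (x + 1) ^ a) ≤ f t := fun t ht ↦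
      (hge t ht.1).trans' <| by
        have : t ^ a ≤ (x + 1) ^ a := rpow_le_rpow (by linarith [ht.1]) ht.2 ha
        exact mul_le_mul_of_nonneg_left (exp_le_exp.2 (by nlinarith)) hm₀
    simpa [volume_real_Ioc_of_le] using setIntegral_ge_of_const_le_real measurableSet_Ioc
      (by simp) hconst (hf.mono_set Ioc_subset_Ioi_self)
  have hnonneg : 0 ≤ᵐ[volume.restrict (Ioi x)] f := (ae_restrict_iff' measurableSet_Ioi).2 <|
    .of_forall fun t ht ↦ (hge t ht).trans' (by positivity)
  exact hIoc.trans (setIntegral_mono_set hf hnonneg Ioc_subset_Ioi_self.eventuallyLE)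

lemma exp_neg_rpow_rpow_two_rpow_le (ha : 0 ≤ a) (hb : 0 ≤ b) (hx : 1 ≤ x) :
    exp (-b * x ^ a) ^ (2 : ℝ) ^ a ≤ exp (-b * (x + 1) ^ a) := by
  have : (x + 1) ^ a ≤ 2 ^ a * x ^ a := by
    rw [← mul_rpow (by norm_num) (by linarith)]
    exact rpow_le_rpow (by linarith) (by linarith) ha
  rw [← exp_mul]
  exact exp_le_exp.2 (by nlinarith)

lemma const_mul_rpow_le_setIntegral_Ioi (hf : IntegrableOn f (Ioi x)) (hm₀ : 0 ≤ m₀)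
    (hm₁ : 0 < m₁) (ha : 0 ≤ a) (hb : 0 ≤ b) (hx : 1 ≤ x)
    (htail : ∀ t ≥ x, m₀ * exp (-b * t ^ a) ≤ f t ∧ f t ≤ m₁ * exp (-b * t ^ a)) :
    m₀ / m₁ ^ (2 : ℝ) ^ a * f x ^ (2 : ℝ) ^ a ≤ ∫ t in Ioi x, f t := by
  have hfx : 0 ≤ f x := (htail x le_rfl).1.trans' (by positivity)
  calc m₀ / m₁ ^ (2 : ℝ) ^ a * f x ^ (2 : ℝ) ^ a
      ≤ m₀ / m₁ ^ (2 : ℝ) ^ a * (m₁ * exp (-b * x ^ a)) ^ (2 : ℝ) ^ a := by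
        gcongr
        exact (htail x le_rfl).2
    _ = m₀ * exp (-b * x ^ a) ^ (2 : ℝ) ^ a := by
        rw [mul_rpow hm₁.le (exp_pos _).le]
        field_simp
    _ ≤ m₀ * exp (-b * (x + 1) ^ a) := by
        gcongr
        exact exp_neg_rpow_rpow_two_rpow_le ha hb hx
    _ ≤ ∫ t in Ioi x, f t := exp_neg_rpow_add_one_le_setIntegral_Ioi hf hm₀ ha hb (by linarith)
        fun t ht ↦ (htail t ht.le).1

lemma setIntegral_Ioi_le_const_mul (hf : IntegrableOn f (Ioi x)) (hm₀ : 0 < m₀) (hm₁ : 0 ≤ m₁)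
    (ha : 1 ≤ a) (hb : 0 < b) (hx : 1 ≤ x)
    (htail : ∀ t ≥ x, m₀ * exp (-b * t ^ a) ≤ f t ∧ f t ≤ m₁ * exp (-b * t ^ a)) :
    ∫ t in Ioi x, f t ≤ m₁ / (b * m₀) * f x := by
  calc ∫ t in Ioi x, f t ≤ m₁ / b * exp (-b * x ^ a) :=
        setIntegral_Ioi_le_of_le_exp_neg_rpow hf hm₁ ha hb hx fun t ht ↦ (htail t ht.le).2
    _ = m₁ / (b * m₀) * (m₀ * exp (-b * x ^ a)) := by field_simp
    _ ≤ m₁ / (b * m₀) * f x := by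
        gcongr
        exact (htail x le_rfl).1

lemma setIntegral_Ioi_mem_Icc (hf : IntegrableOn f (Ioi x)) (hm₀ : 0 < m₀) (hm₁ : 0 < m₁)
    (ha : 1 ≤ a) (hb : 0 < b) (hx : 1 ≤ x)
    (htail : ∀ t ≥ x, m₀ * exp (-b * t ^ a) ≤ f t ∧ f t ≤ m₁ * exp (-b * t ^ a)) :
    ∫ t in Ioi x, f t ∈ Icc (m₀ / m₁ ^ (2 : ℝ) ^ a * f x ^ (2 : ℝ) ^ a) (m₁ / (b * m₀) * f x) :=
  ⟨const_mul_rpow_le_setIntegral_Ioi hf hm₀.le hm₁ (by linarith) hb.le hx htail,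
    setIntegral_Ioi_le_const_mul hf hm₀ hm₁.le ha hb hx htail⟩

end TailIntegral

lemma monotone_setIntegral_Iic {f : ℝ → ℝ} (hf : Integrable f) (hf₀ : 0 ≤ f) :
    Monotone fun x ↦ ∫ t in Iic x, f t := fun _ _ hxy ↦
  setIntegral_mono_set hf.integrableOn (.of_forall hf₀) (Iic_subset_Iic.2 hxy).eventuallyLE

lemma one_sub_setIntegral_Iic {f : ℝ → ℝ} (hf : Integrable f) (h₁ : ∫ x, f x = 1) (x : ℝ) :
    1 - ∫ t in Iic x, f t = ∫ t in Ioi x, f t := by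
  rw [← h₁, ← intervalIntegral.integral_Iic_add_Ioi hf.integrableOn hf.integrableOn,
    add_sub_cancel_left]

lemma min_mul_rpow_le_min {y T S c α γ K : ℝ} (hy : 0 ≤ y) (hyK : y ≤ K) (hK : 0 < K)
    (hα : 0 ≤ α) (hγ : 0 ≤ γ) (hT : c * y ^ α ≤ T) (hS : γ ≤ S) :
    min c (γ / K ^ α) * y ^ α ≤ min T S := by
  refine le_min ((mul_le_mul_of_nonneg_right (min_le_left _ _) (by positivity)).trans hT) ?_
  calc min c (γ / K ^ α) * y ^ α ≤ γ / K ^ α * y ^ α :=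
        mul_le_mul_of_nonneg_right (min_le_right _ _) (by positivity)
    _ ≤ γ / K ^ α * K ^ α := by gcongr
    _ = γ := div_mul_cancel₀ _ (by positivity)
    _ ≤ S := hS

def HasRegularTail (F f : ℝ → ℝ) : Prop :=
  ∃ γ ∈ Ioc (0 : ℝ) (1 / 2), ∃ c₀ c₁ α₀ α₁ : ℝ, 0 < c₀ ∧ 0 < c₁ ∧ 0 < α₀ ∧ 0 < α₁ ∧
    ∀ x : ℝ, min (F x) (1 - F x) ≤ γ →
      c₀ * f x ^ α₀ ≤ min (F x) (1 - F x) ∧ min (F x) (1 - F x) ≤ c₁ * f x ^ α₁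

lemma hasRegularTail_of_tail_bounds {F f : ℝ → ℝ} {x₁ c₀ c₁ α K : ℝ} (hF : Monotone F)
    (hx₁ : 0 ≤ x₁) (hf : ∀ x, 0 < f x) (hc₀ : 0 < c₀) (hc₁ : 0 < c₁) (hα : 0 < α)
    (hfK : ∀ x, x₁ ≤ |x| → f x ≤ K)
    (hright : ∀ x ≥ x₁, 1 - F x ∈ Icc (c₀ * f x ^ α) (c₁ * f x))
    (hleft : ∀ x ≤ -x₁, F x ∈ Icc (c₀ * f x ^ α) (c₁ * f x)) :
    HasRegularTail F f := by
  have hlow : ∀ x, 0 < c₀ * f x ^ α := fun x ↦ mul_pos hc₀ (rpow_pos_of_pos (hf x) α)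
  set p := min (F (-x₁)) (1 - F x₁)
  have hp : 0 < p :=
    lt_min ((hlow _).trans_le (hleft _ le_rfl).1) ((hlow _).trans_le (hright _ le_rfl).1)
  have hp_le : p ≤ 1 / 2 := by
    have := hF (neg_le_self hx₁)
    linarith [min_le_left (F (-x₁)) (1 - F x₁), min_le_right (F (-x₁)) (1 - F x₁)]
  have hK : 0 < K := (hf x₁).trans_le (hfK x₁ (le_abs_self x₁))
  refine ⟨p / 2, ⟨by positivity, by linarith⟩, min c₀ (p / 2 / K ^ α), c₁, α, 1,
    lt_min hc₀ (by positivity), hc₁, hα, one_pos, fun x hx ↦ ?_⟩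
  rw [rpow_one]
  rcases le_or_gt x₁ x with hxr | hxr
  · have hS : p / 2 ≤ F x := by
      linarith [min_le_left (F (-x₁)) (1 - F x₁), hF (hxr.trans' (neg_le_self hx₁))]
    rw [min_comm (F x)]
    exact ⟨min_mul_rpow_le_min (hf x).le (hfK x (hxr.trans (le_abs_self x))) hK hα.le
      (by positivity) (hright x hxr).1 hS, (min_le_left _ _).trans (hright x hxr).2⟩
  rcases le_or_gt x (-x₁) with hxl | hxl
  · have hS : p / 2 ≤ 1 - F x := by
      linarith [min_le_right (F (-x₁)) (1 - F x₁), hF (hxl.trans (neg_le_self hx₁))]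
    have hxK : x₁ ≤ |x| := by rw [abs_of_neg (by linarith)]; linarith
    exact ⟨min_mul_rpow_le_min (hf x).le (hfK x hxK) hK hα.le (by positivity) (hleft x hxl).1 hS,
      (min_le_left _ _).trans (hleft x hxl).2⟩
  have : p ≤ min (F x) (1 - F x) := min_le_min (hF hxl.le) (by linarith [hF hxr.le])
  linarith

theorem regular_tail_of_exponential_tail_general
    (f : ℝ → ℝ) (hfpos : ∀ x, 0 < f x)
    (hfint : (∫ x, f x) = 1)
    (F : ℝ → ℝ) (hF : ∀ x, F x = ∫ y in Set.Iic x, f y)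
    (m₀ m₁ a b x₀ : ℝ) (hm₀ : 0 < m₀) (hm₁ : m₀ < m₁)
    (ha : 1 ≤ a) (hb : 0 < b)
    (htail : ∀ x : ℝ, x₀ < |x| →
      m₀ * Real.exp (-b * |x| ^ a) ≤ f x ∧ f x ≤ m₁ * Real.exp (-b * |x| ^ a)) :
    ∃ γ ∈ Set.Ioc (0:ℝ) (1/2), ∃ c₀ c₁ α₀ α₁ : ℝ,
      0 < c₀ ∧ 0 < c₁ ∧ 0 < α₀ ∧ 0 < α₁ ∧
      ∀ x : ℝ, min (F x) (1 - F x) ≤ γ →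
        c₀ * f x ^ α₀ ≤ min (F x) (1 - F x) ∧
        min (F x) (1 - F x) ≤ c₁ * f x ^ α₁ := by
  obtain rfl : F = fun x ↦ ∫ t in Iic x, f t := funext hF
  have hint : Integrable f := .of_integral_ne_zero (by rw [hfint]; exact one_ne_zero)
  have hm₁' : 0 < m₁ := hm₀.trans hm₁
  set x₁ := |x₀| + 1
  have hx₁ : 1 ≤ x₁ := by linarith [abs_nonneg x₀]
  have hright : ∀ t ≥ x₁, m₀ * exp (-b * t ^ a) ≤ f t ∧ f t ≤ m₁ * exp (-b * t ^ a) :=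
    fun t ht ↦ by
      simpa only [abs_of_pos (by linarith : 0 < t)] using
        htail t (by linarith [le_abs_self x₀, le_abs_self t])
  have hleft : ∀ t ≥ x₁, m₀ * exp (-b * t ^ a) ≤ f (-t) ∧ f (-t) ≤ m₁ * exp (-b * t ^ a) :=
    fun t ht ↦ by
      simpa only [abs_neg, abs_of_pos (by linarith : 0 < t)] using
        htail (-t) (by rw [abs_neg]; linarith [le_abs_self x₀, le_abs_self t])
  refine hasRegularTail_of_tail_bounds (x₁ := x₁) (c₀ := m₀ / m₁ ^ (2 : ℝ) ^ a)
    (c₁ := m₁ / (b * m₀)) (α := (2 : ℝ) ^ a) (K := m₁)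
    (monotone_setIntegral_Iic hint fun x ↦ (hfpos x).le) (by linarith) hfpos
    (by positivity) (by positivity) (by positivity) (fun x hx ↦ ?_)
    (fun x hx ↦ ?_) (fun x hx ↦ ?_)
  · exact (htail x (by linarith [le_abs_self x₀])).2.trans (mul_le_of_le_one_right hm₁'.le
      (exp_le_one_iff.2 (by rw [neg_mul, neg_nonpos]; positivity)))
  · rw [one_sub_setIntegral_Iic hint hfint]
    exact setIntegral_Ioi_mem_Icc hint.integrableOn hm₀ hm₁' ha hb (hx₁.trans hx)
      fun t ht ↦ hright t (hx.trans ht)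
  · rw [← neg_neg x, ← integral_comp_neg_Ioi, neg_neg]
    simpa only [neg_neg] using setIntegral_Ioi_mem_Icc (x := -x) hint.comp_neg.integrableOn hm₀
      hm₁' ha hb (by linarith) fun t ht ↦ hleft t (by linarith)

/-- a bounded unimodal density with full support and
stretched-exponential tail bounds `m₀e^{-b|x|^a} ≤ f(x) ≤ m₁e^{-b|x|^a}`
(`a ≥ 1`, `b > 0`) has a regular tail. -/
theorem regular_tail_of_exponential_tail
    (f : ℝ → ℝ) (hfpos : ∀ x, 0 < f x)
    (hfint : (∫ x, f x) = 1)
    (hbdd : ∃ M : ℝ, ∀ x, f x ≤ M)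
    (m : ℝ) (hmono : MonotoneOn f (Set.Iic m)) (hanti : AntitoneOn f (Set.Ici m))
    (F : ℝ → ℝ) (hF : ∀ x, F x = ∫ y in Set.Iic x, f y)
    (m₀ m₁ a b x₀ : ℝ) (hm₀ : 0 < m₀) (hm₁ : m₀ < m₁)
    (ha : 1 ≤ a) (hb : 0 < b) (hx₀ : 1 < x₀)
    (htail : ∀ x : ℝ, x₀ < |x| →
      m₀ * Real.exp (-b * |x| ^ a) ≤ f x ∧ f x ≤ m₁ * Real.exp (-b * |x| ^ a)) :
    ∃ γ ∈ Set.Ioc (0:ℝ) (1/2), ∃ c₀ c₁ α₀ α₁ : ℝ,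
      0 < c₀ ∧ 0 < c₁ ∧ 0 < α₀ ∧ 0 < α₁ ∧
      ∀ x : ℝ, min (F x) (1 - F x) ≤ γ →
        c₀ * f x ^ α₀ ≤ min (F x) (1 - F x) ∧
        min (F x) (1 - F x) ≤ c₁ * f x ^ α₁ :=
  regular_tail_of_exponential_tail_general f hfpos hfint F hF m₀ m₁ a b x₀ hm₀ hm₁ ha hb htail
end

section
/- Consider the additive exponential-noise channel Y = X + Z where Z ~ Exponential(b) and the input X has the mixed distribution with generalized density f_X(x) = (b/(a+b)) δ(x) + (a/(a+b)²) exp(−x/(a+b)) for x ≥ 0 (a, b > 0). Then the output Y is Exponential(a+b)-distributed, and the mutual information equals I(X;Y) = log(1 + a/b). -/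
/-!
Write `f_m` for the exponential density of mean `m`. Given `X = x ≥ 0`, the output `Y` has
density `f_b (y - x)`, so the law of `(X, Y)` has density `L(x, y) = f_b (y - x) / f_{a+b} y`
with respect to `P_X ⊗ Exp(a + b)`. For `y ≥ 0`, the atom of `P_X` at `0` contributes
`e^{-k y}` and its continuous part `1 - e^{-k y}` to `∫ L(x, y) dP_X(x)` (with
`k = a / (b (a + b))`), so the `Y`-marginal of this joint law is `Exp(a + b)` itself and `L` is
the Radon–Nikodym derivative of `P_{XY}` with respect to `P_X ⊗ P_Y`. Finally
`log L(X, Y) = log ((a + b) / b) + Y / (a + b) - Z / b`, and `E Y = a + b`, `E Z = b`.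
-/

open MeasureTheory ProbabilityTheory Set
open scoped ENNReal

namespace ProbabilityTheory

lemma expMeasure_eq_withDensity (r : ℝ) :
    expMeasure r = volume.withDensity (exponentialPDF r) := rfl

-- `expMeasure r` is parametrized by the rate `r`; the channel is parametrized by means.
lemma exponentialPDF_inv_eq (m x : ℝ) :
    exponentialPDF m⁻¹ x = ENNReal.ofReal (if 0 ≤ x then 1 / m * Real.exp (-x / m) else 0) := by
  rw [exponentialPDF_eq, one_div, neg_div, div_eq_inv_mul]

lemma expMeasure_inv_eq_withDensity (m : ℝ) :
    expMeasure m⁻¹ = volume.withDensity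
      fun x => ENNReal.ofReal (if 0 ≤ x then 1 / m * Real.exp (-x / m) else 0) := by
  rw [expMeasure_eq_withDensity, funext (exponentialPDF_inv_eq m)]

lemma measurable_exponentialPDF (r : ℝ) : Measurable (exponentialPDF r) :=
  (measurable_exponentialPDFReal r).ennreal_ofReal

lemma ae_nonneg_expMeasure (r : ℝ) : ∀ᵐ x ∂expMeasure r, 0 ≤ x := by
  rw [expMeasure_eq_withDensity, ae_withDensity_iff (measurable_exponentialPDF r)]
  filter_upwards with x hx
  by_contra! h
  exact hx (exponentialPDF_of_neg h)

lemma integral_id_expMeasure {r : ℝ} (hr : 0 < r) : ∫ x, x ∂expMeasure r = r⁻¹ := by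
  have hpdf : ∀ x, (exponentialPDF r x).toReal = if 0 ≤ x then r * Real.exp (-(r * x)) else 0 :=
    fun x => by
      rw [exponentialPDF_eq, ENNReal.toReal_ofReal]
      split_ifs <;> positivity
  rw [expMeasure_eq_withDensity,
    integral_withDensity_eq_integral_toReal_smul (measurable_exponentialPDF r)
      (ae_of_all _ fun _ => ENNReal.ofReal_lt_top),
    ← setIntegral_eq_integral_of_forall_compl_eq_zero (s := Ioi 0) fun x hx => by
      rw [hpdf, smul_eq_mul]
      split_ifs with h
      · rw [le_antisymm (not_lt.1 hx) h, mul_zero]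
      · rw [zero_mul]]
  calc ∫ x in Ioi 0, (exponentialPDF r x).toReal • x
      = ∫ x in Ioi 0, r * (x ^ ((2 : ℝ) - 1) * Real.exp (-(r * x))) :=
        setIntegral_congr_fun measurableSet_Ioi fun x hx => by
          rw [hpdf, if_pos (le_of_lt (mem_Ioi.1 hx)), smul_eq_mul]
          norm_num
          ring
    _ = r⁻¹ := by
      rw [integral_const_mul, Real.integral_rpow_mul_exp_neg_mul_Ioi two_pos hr, Real.Gamma_two,
        Real.rpow_two]
      field_simp

lemma integral_eq_inv_of_map_eq_expMeasure {Ω : Type*} [MeasurableSpace Ω] {μ : Measure Ω}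
    {Y : Ω → ℝ} (hY : AEMeasurable Y μ) {r : ℝ} (hr : 0 < r) (hlaw : μ.map Y = expMeasure r) :
    ∫ ω, Y ω ∂μ = r⁻¹ := by
  rw [← integral_map (f := fun x => x) hY aestronglyMeasurable_id, hlaw, integral_id_expMeasure hr]

end ProbabilityTheory

lemma intervalIntegral.integral_mul_exp_mul_sub (k y : ℝ) :
    ∫ x in (0 : ℝ)..y, k * Real.exp (k * (x - y)) = 1 - Real.exp (-(k * y)) := by
  have hderiv : ∀ x, HasDerivAt (fun x => Real.exp (k * (x - y))) (k * Real.exp (k * (x - y))) x :=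
    fun x => by
      simpa [mul_comm] using ((hasDerivAt_id x).sub_const y |>.const_mul k).exp
  rw [intervalIntegral.integral_eq_sub_of_hasDerivAt (fun x _ => hderiv x)
    (by apply Continuous.intervalIntegrable; fun_prop)]
  simp

section WithDensity

variable {α β : Type*} [MeasurableSpace α] [MeasurableSpace β]

lemma MeasureTheory.MeasurePreserving.map_withDensity {μ : Measure α} {ν : Measure β}
    {e : α ≃ᵐ β} (he : MeasurePreserving e μ ν) (f : α → ℝ≥0∞) :
    (μ.withDensity f).map e = ν.withDensity (f ∘ e.symm) := by
  ext s hs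
  rw [Measure.map_apply e.measurable hs, withDensity_apply _ (e.measurable hs),
    withDensity_apply _ hs, ← he.setLIntegral_comp_preimage_emb e.measurableEmbedding]
  simp

lemma MeasureTheory.Measure.prod_withDensity_right_withDensity_eq {ρ : Measure α}
    {ν : Measure β} [SFinite ρ] [SFinite ν] {f : β → ℝ≥0∞} {G H : α × β → ℝ≥0∞}
    (hf : Measurable f) (hG : Measurable G) (h : ∀ᵐ x ∂ρ, ∀ y, f y * G (x, y) = H (x, y)) :
    (ρ.prod (ν.withDensity f)).withDensity G = (ρ.prod ν).withDensity H := by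
  rw [prod_withDensity_right hf, ←
    withDensity_mul (ρ.prod ν) (f := fun p => f p.2) (hf.comp measurable_snd) hG]
  refine withDensity_congr_ae ?_
  have h' : ∀ᵐ p ∂ρ.prod ν, ∀ y, f y * G (p.1, y) = H (p.1, y) :=
    quasiMeasurePreserving_fst.ae h
  filter_upwards [h'] with p hp
  exact hp p.2

lemma MeasureTheory.Measure.map_snd_withDensity_prod_eq {ρ : Measure α} {ν : Measure β}
    [SFinite ρ] [SFinite ν] {G : α × β → ℝ≥0∞} (hG : Measurable G)
    (h : ∀ᵐ y ∂ν, ∫⁻ x, G (x, y) ∂ρ = 1) :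
    ((ρ.prod ν).withDensity G).map Prod.snd = ν := by
  ext B hB
  rw [Measure.map_apply measurable_snd hB, withDensity_apply _ (measurable_snd hB),
    ← univ_prod, ← Measure.prod_restrict, Measure.restrict_univ,
    lintegral_prod_symm _ hG.aemeasurable, lintegral_congr_ae (ae_restrict_of_ae h),
    setLIntegral_one]

lemma MeasureTheory.ae_rnDeriv_map_eq {Ω : Type*} [MeasurableSpace Ω] {μ : Measure Ω}
    {W : Ω → α} (hW : Measurable W) {ν : Measure α} [SigmaFinite ν] {G : α → ℝ≥0∞}
    (hG : Measurable G) (hlaw : μ.map W = ν.withDensity G) :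
    ∀ᵐ ω ∂μ, (μ.map W).rnDeriv ν (W ω) = G (W ω) := by
  refine ae_of_ae_map (p := fun a => (μ.map W).rnDeriv ν a = G a) hW.aemeasurable ?_
  rw [hlaw]
  exact (Measure.rnDeriv_withDensity ν hG).filter_mono
    (withDensity_absolutelyContinuous ν G).ae_le

end WithDensity

lemma ProbabilityTheory.map_prod_add_eq_withDensity {Ω : Type*} [MeasurableSpace Ω]
    {μ : Measure Ω} [IsFiniteMeasure μ] {X Z : Ω → ℝ} (hX : Measurable X) (hZ : Measurable Z)
    (hXZ : IndepFun X Z μ) {g : ℝ → ℝ≥0∞} (hg : Measurable g)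
    (hZlaw : μ.map Z = volume.withDensity g) :
    μ.map (fun ω => (X ω, X ω + Z ω))
      = ((μ.map X).prod volume).withDensity fun p => g (p.2 - p.1) := by
  have hshear : (fun ω => (X ω, X ω + Z ω))
      = MeasurableEquiv.shearAddRight ℝ ∘ fun ω => (X ω, Z ω) := rfl
  rw [hshear, ← Measure.map_map (MeasurableEquiv.measurable _) (hX.prodMk hZ),
    (indepFun_iff_map_prod_eq_prod_map_map hX.aemeasurable hZ.aemeasurable).1 hXZ, hZlaw,
    prod_withDensity_right hg, (measurePreserving_prod_add _ _).map_withDensity]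
  congr 1 with p
  simp [MeasurableEquiv.shearAddRight, sub_eq_neg_add]

section ExponentialChannel

noncomputable def mixedInputLaw (a b : ℝ) : Measure ℝ :=
  ENNReal.ofReal (b / (a + b)) • Measure.dirac 0
    + volume.withDensity fun x => ENNReal.ofReal
        (if 0 ≤ x then a / (a + b) ^ 2 * Real.exp (-x / (a + b)) else 0)

-- `f_b (y - x) / f_{a+b} y` for `x ≥ 0`.
noncomputable def likelihoodRatio (a b : ℝ) (p : ℝ × ℝ) : ℝ≥0∞ :=
  ENNReal.ofReal
    (if p.1 ≤ p.2 then (a + b) / b * Real.exp (p.2 / (a + b) - (p.2 - p.1) / b) else 0)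

lemma measurable_likelihoodRatio (a b : ℝ) : Measurable (likelihoodRatio a b) :=
  (Measurable.ite (measurableSet_le measurable_fst measurable_snd) (by fun_prop)
    measurable_const).ennreal_ofReal

variable {a b : ℝ}

lemma exponentialPDF_mul_likelihoodRatio (hb : 0 < b) (hab : 0 < a + b) {x : ℝ}
    (hx : 0 ≤ x) (y : ℝ) :
    exponentialPDF (a + b)⁻¹ y * likelihoodRatio a b (x, y) = exponentialPDF b⁻¹ (y - x) := by
  rw [exponentialPDF_inv_eq, exponentialPDF_inv_eq, likelihoodRatio]
  dsimp only
  by_cases hxy : x ≤ y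
  · rw [if_pos (hx.trans hxy), if_pos hxy, if_pos (sub_nonneg.2 hxy),
      ← ENNReal.ofReal_mul (by positivity), mul_mul_mul_comm, ← Real.exp_add]
    congr 2
    · field_simp
    · congr 1
      ring
  · have hyx : ¬ 0 ≤ y - x := by linarith
    rw [if_neg hxy, if_neg hyx, ENNReal.ofReal_zero, mul_zero]

lemma map_prod_add_eq_withDensity_likelihoodRatio {Ω : Type*} [MeasurableSpace Ω]
    {μ : Measure Ω} [IsFiniteMeasure μ] (hb : 0 < b) (hab : 0 < a + b) {X Z : Ω → ℝ}
    (hX : Measurable X) (hZ : Measurable Z) (hXZ : IndepFun X Z μ)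
    (hXnonneg : ∀ᵐ x ∂μ.map X, 0 ≤ x) (hZlaw : μ.map Z = expMeasure b⁻¹) :
    μ.map (fun ω => (X ω, X ω + Z ω))
      = ((μ.map X).prod (expMeasure (a + b)⁻¹)).withDensity (likelihoodRatio a b) := by
  rw [map_prod_add_eq_withDensity hX hZ hXZ (measurable_exponentialPDF _) hZlaw]
  refine (Measure.prod_withDensity_right_withDensity_eq (measurable_exponentialPDF _)
    (measurable_likelihoodRatio a b) ?_).symm
  filter_upwards [hXnonneg] with x hx y
  exact exponentialPDF_mul_likelihoodRatio hb hab hx y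

lemma ae_nonneg_mixedInputLaw (a b : ℝ) : ∀ᵐ x ∂mixedInputLaw a b, 0 ≤ x := by
  rw [mixedInputLaw, ae_add_measure_iff, ae_withDensity_iff
    (Measurable.ite measurableSet_Ici (by fun_prop) measurable_const).ennreal_ofReal]
  refine ⟨Measure.ae_smul_measure (by simp) _, ae_of_all _ fun x hx => ?_⟩
  by_contra! h
  simp [h.not_ge] at hx

lemma ofReal_mul_likelihoodRatio_eq_indicator (ha : 0 < a) (hb : 0 < b) (x y : ℝ) :
    ENNReal.ofReal (if 0 ≤ x then a / (a + b) ^ 2 * Real.exp (-x / (a + b)) else 0)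
        * likelihoodRatio a b (x, y)
      = (Icc 0 y).indicator (fun x => ENNReal.ofReal
          (a / (b * (a + b)) * Real.exp (a / (b * (a + b)) * (x - y)))) x := by
  by_cases h0 : 0 ≤ x
  · by_cases h1 : x ≤ y
    · rw [if_pos h0, likelihoodRatio, if_pos h1, indicator_of_mem (mem_Icc.2 ⟨h0, h1⟩),
        ← ENNReal.ofReal_mul (by positivity), mul_mul_mul_comm, ← Real.exp_add]
      congr 2
      · field_simp
      · congr 1
        field_simp
        ring
    · rw [likelihoodRatio, if_neg h1, ENNReal.ofReal_zero, mul_zero,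
        indicator_of_notMem fun h => h1 h.2]
  · rw [if_neg h0, ENNReal.ofReal_zero, zero_mul, indicator_of_notMem fun h => h0 h.1]

lemma lintegral_likelihoodRatio_mixedInputLaw (ha : 0 < a) (hb : 0 < b) {y : ℝ} (hy : 0 ≤ y) :
    ∫⁻ x, likelihoodRatio a b (x, y) ∂mixedInputLaw a b = 1 := by
  have hG : Measurable fun x => likelihoodRatio a b (x, y) :=
    (measurable_likelihoodRatio a b).comp (measurable_id.prodMk measurable_const)
  have hatom : likelihoodRatio a b (0, y)
      = ENNReal.ofReal ((a + b) / b * Real.exp (-(a / (b * (a + b)) * y))) := by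
    rw [likelihoodRatio, if_pos hy]
    congr 3
    field_simp
    ring
  rw [mixedInputLaw, lintegral_add_measure, lintegral_smul_measure, lintegral_dirac' _ hG,
    lintegral_withDensity_eq_lintegral_mul _
      (Measurable.ite measurableSet_Ici (by fun_prop) measurable_const).ennreal_ofReal hG]
  simp only [Pi.mul_apply, ofReal_mul_likelihoodRatio_eq_indicator ha hb]
  rw [lintegral_indicator measurableSet_Icc, ← ofReal_integral_eq_lintegral_ofReal
    (by apply Continuous.integrableOn_Icc; fun_prop)
    (ae_of_all _ fun x => by positivity), integral_Icc_eq_integral_Ioc,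
    ← intervalIntegral.integral_of_le hy, intervalIntegral.integral_mul_exp_mul_sub, hatom,
    smul_eq_mul, ← ENNReal.ofReal_mul (by positivity), ← ENNReal.ofReal_add (by positivity)
    (sub_nonneg.2 (Real.exp_le_one_iff.2 (neg_nonpos.2 (by positivity)))), ← ENNReal.ofReal_one]
  congr 1
  field_simp
  ring

lemma logb_toReal_likelihoodRatio (hb : 0 < b) (hab : 0 < a + b) {x y : ℝ} (hxy : x ≤ y) :
    Real.logb 2 (likelihoodRatio a b (x, y)).toReal
      = Real.logb 2 ((a + b) / b) + (y / (a + b) - (y - x) / b) / Real.log 2 := by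
  rw [likelihoodRatio, if_pos hxy, ENNReal.toReal_ofReal (by positivity),
    Real.logb, Real.log_mul (by positivity) (Real.exp_ne_zero _), Real.log_exp, add_div,
    Real.logb]

lemma integral_logb_likelihoodRatio {Ω : Type*} [MeasurableSpace Ω] {μ : Measure Ω}
    [IsProbabilityMeasure μ] (hb : 0 < b) (hab : 0 < a + b) {X Z : Ω → ℝ}
    (hX : Measurable X) (hZ : Measurable Z) (hZlaw : μ.map Z = expMeasure b⁻¹)
    (hYlaw : μ.map (fun ω => X ω + Z ω) = expMeasure (a + b)⁻¹) :
    ∫ ω, Real.logb 2 (likelihoodRatio a b (X ω, X ω + Z ω)).toReal ∂μ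
      = Real.logb 2 (1 + a / b) := by
  have hEZ : ∫ ω, Z ω ∂μ = b := by
    simpa using integral_eq_inv_of_map_eq_expMeasure hZ.aemeasurable (inv_pos.2 hb) hZlaw
  have hEY : ∫ ω, X ω + Z ω ∂μ = a + b := by
    simpa using
      integral_eq_inv_of_map_eq_expMeasure (hX.add hZ).aemeasurable (inv_pos.2 hab) hYlaw
  have hZint : Integrable Z μ := .of_integral_ne_zero (hEZ ▸ hb.ne')
  have hYint : Integrable (fun ω => X ω + Z ω) μ := .of_integral_ne_zero (hEY ▸ hab.ne')
  have hint : Integrable (fun ω => ((X ω + Z ω) / (a + b) - Z ω / b) / Real.log 2) μ :=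
    ((hYint.div_const _).sub (hZint.div_const _)).div_const _
  have hZnonneg : ∀ᵐ ω ∂μ, 0 ≤ Z ω :=
    ae_of_ae_map hZ.aemeasurable (hZlaw ▸ ae_nonneg_expMeasure _)
  calc ∫ ω, Real.logb 2 (likelihoodRatio a b (X ω, X ω + Z ω)).toReal ∂μ
      = ∫ ω, Real.logb 2 ((a + b) / b)
          + ((X ω + Z ω) / (a + b) - Z ω / b) / Real.log 2 ∂μ := by
        refine integral_congr_ae ?_
        filter_upwards [hZnonneg] with ω hω
        rw [logb_toReal_likelihoodRatio hb hab (by linarith), add_sub_cancel_left]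
    _ = Real.logb 2 ((a + b) / b)
          + ((∫ ω, X ω + Z ω ∂μ) / (a + b) - (∫ ω, Z ω ∂μ) / b) / Real.log 2 := by
        rw [integral_add (integrable_const _) hint, integral_const, integral_div,
          integral_sub (hYint.div_const _) (hZint.div_const _), integral_div, integral_div]
        simp
    _ = Real.logb 2 (1 + a / b) := by
      rw [hEY, hEZ, div_self hab.ne', div_self hb.ne', sub_self, zero_div, add_zero]
      congr 1
      field_simp
      ring

end ExponentialChannel

/-- additive exponential-noise channel with the mean-constrained
capacity-achieving mixed input: the output is `Exponential(a+b)` and the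
mutual information equals `log₂(1 + a/b)`. -/
theorem exponential_channel_output_and_mutual_information
    {Ω : Type*} [MeasurableSpace Ω] (μ : Measure Ω) [IsProbabilityMeasure μ]
    (a b : ℝ) (ha : 0 < a) (hb : 0 < b)
    (X Z Y : Ω → ℝ) (hX : Measurable X) (hZ : Measurable Z)
    (hZlaw : Measure.map Z μ = volume.withDensity
      (fun z => ENNReal.ofReal (if 0 ≤ z then (1 / b) * Real.exp (-z / b) else 0)))
    (hXlaw : Measure.map X μ
      = ENNReal.ofReal (b / (a + b)) • Measure.dirac (0:ℝ)
        + volume.withDensity (fun x => ENNReal.ofReal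
            (if 0 ≤ x then a / (a + b) ^ 2 * Real.exp (-x / (a + b)) else 0)))
    (hindep : IndepFun X Z μ)
    (hY : ∀ ω, Y ω = X ω + Z ω) :
    Measure.map Y μ = volume.withDensity
      (fun y => ENNReal.ofReal
        (if 0 ≤ y then (1 / (a + b)) * Real.exp (-y / (a + b)) else 0)) ∧
    (∫ ω, Real.logb 2
        (((Measure.map (fun ω => (X ω, Y ω)) μ).rnDeriv
            ((Measure.map X μ).prod (Measure.map Y μ)) (X ω, Y ω)).toReal) ∂μ)
      = Real.logb 2 (1 + a / b) := by
  obtain rfl : Y = fun ω => X ω + Z ω := funext hY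
  have hab : 0 < a + b := by linarith
  have hXY : Measurable fun ω => (X ω, X ω + Z ω) := hX.prodMk (hX.add hZ)
  have hZexp : μ.map Z = expMeasure b⁻¹ := hZlaw.trans (expMeasure_inv_eq_withDensity b).symm
  have hXnonneg : ∀ᵐ x ∂μ.map X, 0 ≤ x := hXlaw ▸ ae_nonneg_mixedInputLaw a b
  have hjoint :=
    map_prod_add_eq_withDensity_likelihoodRatio hb hab hX hZ hindep hXnonneg hZexp
  have hYlaw : μ.map (fun ω => X ω + Z ω) = expMeasure (a + b)⁻¹ := by
    have := isProbabilityMeasure_expMeasure (inv_pos.2 hab)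
    rw [show (fun ω => X ω + Z ω) = Prod.snd ∘ fun ω => (X ω, X ω + Z ω) from rfl,
      ← Measure.map_map measurable_snd hXY, hjoint]
    refine Measure.map_snd_withDensity_prod_eq (measurable_likelihoodRatio a b) ?_
    filter_upwards [ae_nonneg_expMeasure _] with y hy
    rw [hXlaw]
    exact lintegral_likelihoodRatio_mixedInputLaw ha hb hy
  refine ⟨hYlaw.trans (expMeasure_inv_eq_withDensity _), ?_⟩
  rw [← hYlaw] at hjoint
  rw [← integral_logb_likelihoodRatio hb hab hX hZ hZexp hYlaw]
  refine integral_congr_ae ?_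
  filter_upwards [ae_rnDeriv_map_eq hXY (measurable_likelihoodRatio a b) hjoint] with ω hω
  rw [hω]
end
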